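/- Let L be a {Φ∪Σ,Δ}-field, fix ∂ = ∂_j ∈ Δ and σ_i, σ_k ∈ Σ, and let B ∈ M_n(L), C ∈ GL_n(L), D ∈ GL_n(L) satisfy σ_k(B)·C = ∂(C) + C·B and σ_i(B)·D = ∂(D) + D·B. If Z ∈ M_n(L) satisfies ∂(Z) = [σ_k(B), Z], then the matrix N := σ_k(D)·Z·C·D^{-1}·σ_i(C)^{-1} satisfies ∂(N) = [σ_i(σ_k(B)), N]; equivalently, σ_i^{-1}(N) again satisfies ∂(σ_i^{-1}(N)) = [σ_k(B), σ_i^{-1}(N)]. -/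

import Mathlib

/-- A `{Φ∪Σ,Δ}`-field structure on a field `L`: commuting automorphisms
`φ_1,…,φ_q` and `σ_1,…,σ_r` together with derivations `∂_1,…,∂_m`, all of
which pairwise commute. -/
structure PhiSigmaDeltaField (q r m : ℕ) (L : Type*) [Field L] where
  φ : Fin q → L ≃+* L
  σ : Fin r → L ≃+* L
  der : Fin m → L → L
  der_add : ∀ i x y, der i (x + y) = der i x + der i y
  der_mul : ∀ i x y, der i (x * y) = der i x * y + x * der i y
  comm_φφ : ∀ i j x, φ i (φ j x) = φ j (φ i x)
  comm_φσ : ∀ i j x, φ i (σ j x) = σ j (φ i x)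
  comm_σσ : ∀ i j x, σ i (σ j x) = σ j (σ i x)
  comm_φder : ∀ i j x, φ i (der j x) = der j (φ i x)
  comm_σder : ∀ i j x, σ i (der j x) = der j (σ i x)
  comm_derder : ∀ i j x, der i (der j x) = der j (der i x)

/-!
Read `∂X = A'X − XA` as "`X` is a gauge transformation from the system `∂Y = AY` to `∂Y = A'Y`".
Such transformations compose, invert, and are transported by any automorphism commuting with `∂`.
The hypotheses say that `C : B → σ_k B`, `D : B → σ_i B` and `Z : σ_k B → σ_k B`, so
`σ_i(C)⁻¹ : σ_iσ_k B → σ_i B`, `D⁻¹ : σ_i B → B` and `σ_k(D) : σ_k B → σ_kσ_i B = σ_iσ_k B`;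
the composite `N` is therefore a gauge transformation from `σ_iσ_k B` to itself, and applying
`σ_i⁻¹` gives the second claim.
-/

namespace Matrix

variable {S R : Type*} [CommSemiring S] [CommRing R] [Algebra S R] {n : Type*}

theorem map_map_comm {α : Type*} {f g : α → α} (h : Function.Commute f g) (X : Matrix n n α) :
    (X.map g).map f = (X.map f).map g := by
  rw [map_map, map_map, h.comp_eq]

theorem map_derivation_one [DecidableEq n] (d : Derivation S R R) :
    (1 : Matrix n n R).map d = 0 := by
  ext a b
  by_cases h : a = b <;> simp [h]

variable [Fintype n]

theorem map_derivation_mul (d : Derivation S R R) (X Y : Matrix n n R) :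
    (X * Y).map d = X.map d * Y + X * Y.map d := by
  ext a b
  simp only [map_apply, mul_apply, add_apply, map_sum, Derivation.leibniz, smul_eq_mul,
    ← Finset.sum_add_distrib]
  exact Finset.sum_congr rfl fun _ _ => by ring

def IsGaugeTransform (d : Derivation S R R) (X A A' : Matrix n n R) : Prop :=
  X.map d = A' * X - X * A

namespace IsGaugeTransform

variable {d : Derivation S R R} {X Y A A' A'' : Matrix n n R}

theorem of_mul_eq_add (h : A' * X = X.map d + X * A) : IsGaugeTransform d X A A' :=
  eq_sub_of_add_eq h.symm

theorem mul (hY : IsGaugeTransform d Y A' A'') (hX : IsGaugeTransform d X A A') :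
    IsGaugeTransform d (Y * X) A A'' := by
  unfold IsGaugeTransform at *
  rw [map_derivation_mul, hX, hY]
  noncomm_ring

theorem inv [DecidableEq n] (hX : IsGaugeTransform d X A A') (hXunit : IsUnit X) :
    IsGaugeTransform d X⁻¹ A' A := by
  have hdet : IsUnit X.det := (isUnit_iff_isUnit_det X).mp hXunit
  have hXY : X * X⁻¹ = 1 := mul_nonsing_inv X hdet
  have hYX : X⁻¹ * X = 1 := nonsing_inv_mul X hdet
  have hprod : X.map d * X⁻¹ + X * X⁻¹.map d = 0 := by
    rw [← map_derivation_mul, hXY, map_derivation_one]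
  calc X⁻¹.map d = X⁻¹ * (X * X⁻¹.map d) := by rw [← Matrix.mul_assoc, hYX, Matrix.one_mul]
    _ = X⁻¹ * -((A' * X - X * A) * X⁻¹) := by rw [← hX, eq_neg_of_add_eq_zero_right hprod]
    _ = A * X⁻¹ - X⁻¹ * A' := by
      simp only [Matrix.sub_mul, Matrix.mul_sub, Matrix.mul_neg, Matrix.mul_assoc, hXY]
      rw [← Matrix.mul_assoc X⁻¹ X, hYX]
      noncomm_ring

theorem map {G : Type*} [FunLike G R R] [RingHomClass G R R] (σ : G)
    (hσ : Function.Commute σ d) (hX : IsGaugeTransform d X A A') :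
    IsGaugeTransform d (X.map σ) (A.map σ) (A'.map σ) := by
  unfold IsGaugeTransform at *
  rw [← map_map_comm hσ, hX, Matrix.map_sub _ (map_sub σ)]
  exact congrArg₂ (· - ·) (Matrix.map_mul (f := (σ : R →+* R))) (Matrix.map_mul (f := (σ : R →+* R)))

end IsGaugeTransform

end Matrix

namespace PhiSigmaDeltaField

variable {q r m : ℕ} {L : Type*} [Field L] (F : PhiSigmaDeltaField q r m L)

def derivation (j : Fin m) : Derivation ℤ L L :=
  Derivation.mk' (AddMonoidHom.mk' (F.der j) (F.der_add j)).toIntLinearMap fun a b => by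
    simp only [AddMonoidHom.coe_toIntLinearMap, AddMonoidHom.mk'_apply, F.der_mul, smul_eq_mul]
    ring

theorem commute_σ_derivation (i : Fin r) (j : Fin m) :
    Function.Commute (F.σ i) (F.derivation j) :=
  F.comm_σder i j

theorem commute_σ_symm_derivation (i : Fin r) (j : Fin m) :
    Function.Commute (F.σ i).symm (F.derivation j) :=
  (F.commute_σ_derivation i j).inverse_left (F.σ i).left_inv (F.σ i).right_inv

end PhiSigmaDeltaField

open Matrix in
theorem statement13_general {n q r m : ℕ} {L : Type*} [Field L]
    (F : PhiSigmaDeltaField q r m L) (j : Fin m) (i k : Fin r)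
    (B C D : Matrix (Fin n) (Fin n) L)
    (hC : IsUnit C) (hD : IsUnit D)
    (hCeq : B.map ⇑(F.σ k) * C = C.map (F.der j) + C * B)
    (hDeq : B.map ⇑(F.σ i) * D = D.map (F.der j) + D * B)
    (Z : Matrix (Fin n) (Fin n) L)
    (hZ : Z.map (F.der j) = B.map ⇑(F.σ k) * Z - Z * B.map ⇑(F.σ k)) :
    (D.map ⇑(F.σ k) * Z * C * D⁻¹ * (C.map ⇑(F.σ i))⁻¹).map (F.der j) =
        (B.map ⇑(F.σ k)).map ⇑(F.σ i) *
            (D.map ⇑(F.σ k) * Z * C * D⁻¹ * (C.map ⇑(F.σ i))⁻¹) -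
          (D.map ⇑(F.σ k) * Z * C * D⁻¹ * (C.map ⇑(F.σ i))⁻¹) *
            (B.map ⇑(F.σ k)).map ⇑(F.σ i) ∧
      ((D.map ⇑(F.σ k) * Z * C * D⁻¹ * (C.map ⇑(F.σ i))⁻¹).map ⇑(F.σ i).symm).map (F.der j) =
        B.map ⇑(F.σ k) *
            ((D.map ⇑(F.σ k) * Z * C * D⁻¹ * (C.map ⇑(F.σ i))⁻¹).map ⇑(F.σ i).symm) -
          ((D.map ⇑(F.σ k) * Z * C * D⁻¹ * (C.map ⇑(F.σ i))⁻¹).map ⇑(F.σ i).symm) *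
            B.map ⇑(F.σ k) := by
  have hBC : IsGaugeTransform (F.derivation j) C B (B.map (F.σ k)) := .of_mul_eq_add hCeq
  have hBD : IsGaugeTransform (F.derivation j) D B (B.map (F.σ i)) := .of_mul_eq_add hDeq
  have hσB : (B.map (F.σ i)).map (F.σ k) = (B.map (F.σ k)).map (F.σ i) :=
    map_map_comm (F.comm_σσ k i) B
  have hN : IsGaugeTransform (F.derivation j) (D.map (F.σ k) * Z * C * D⁻¹ * (C.map (F.σ i))⁻¹)
      ((B.map (F.σ k)).map (F.σ i)) ((B.map (F.σ k)).map (F.σ i)) := by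
    have hσD := hBD.map (F.σ k) (F.commute_σ_derivation k j)
    rw [hσB] at hσD
    exact (((hσD.mul hZ).mul hBC).mul (hBD.inv hD)).mul
      ((hBC.map (F.σ i) (F.commute_σ_derivation i j)).inv (hC.map (F.σ i).toRingHom.mapMatrix))
  have hσB_symm : ((B.map (F.σ k)).map (F.σ i)).map (F.σ i).symm = B.map (F.σ k) := by
    ext; simp
  have hN_symm := hN.map (F.σ i).symm (F.commute_σ_symm_derivation i j)
  rw [hσB_symm] at hN_symm
  exact ⟨hN, hN_symm⟩

theorem statement13 {n q r m : ℕ} (hn : 1 ≤ n) {L : Type*} [Field L] [CharZero L]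
    (F : PhiSigmaDeltaField q r m L) (j : Fin m) (i k : Fin r)
    (B C D : Matrix (Fin n) (Fin n) L)
    (hC : IsUnit C) (hD : IsUnit D)
    (hCeq : B.map ⇑(F.σ k) * C = C.map (F.der j) + C * B)
    (hDeq : B.map ⇑(F.σ i) * D = D.map (F.der j) + D * B)
    (Z : Matrix (Fin n) (Fin n) L)
    (hZ : Z.map (F.der j) = B.map ⇑(F.σ k) * Z - Z * B.map ⇑(F.σ k)) :
    (D.map ⇑(F.σ k) * Z * C * D⁻¹ * (C.map ⇑(F.σ i))⁻¹).map (F.der j) =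
        (B.map ⇑(F.σ k)).map ⇑(F.σ i) *
            (D.map ⇑(F.σ k) * Z * C * D⁻¹ * (C.map ⇑(F.σ i))⁻¹) -
          (D.map ⇑(F.σ k) * Z * C * D⁻¹ * (C.map ⇑(F.σ i))⁻¹) *
            (B.map ⇑(F.σ k)).map ⇑(F.σ i) ∧
      ((D.map ⇑(F.σ k) * Z * C * D⁻¹ * (C.map ⇑(F.σ i))⁻¹).map ⇑(F.σ i).symm).map (F.der j) =
        B.map ⇑(F.σ k) *
            ((D.map ⇑(F.σ k) * Z * C * D⁻¹ * (C.map ⇑(F.σ i))⁻¹).map ⇑(F.σ i).symm) -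
          ((D.map ⇑(F.σ k) * Z * C * D⁻¹ * (C.map ⇑(F.σ i))⁻¹).map ⇑(F.σ i).symm) *
            B.map ⇑(F.σ k) :=
  statement13_general F j i k B C D hC hD hCeq hDeq Z hZ
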